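/- Let p be a prime. Every g ∈ SL₂(ℤ_p) can be written as g = n(b)·m(a)·γ·k with b ∈ ℤ_p, a ∈ ℤ_p^×, k ∈ K(p), and γ an element of the set {1} ∪ {w·n(j) : j = 0, 1, …, p−1}. Moreover, γ is uniquely determined by g: the p+1 double cosets N(ℤ_p)M(ℤ_p)·γ·K(p), for γ ranging over {1} ∪ {w·n(j) : 0 ≤ j ≤ p−1}, are pairwise disjoint. -/

import Mathlib

open Matrix

variable (p : ℕ) [Fact p.Prime]

/-- The element `n(b) = [[1, b], [0, 1]]` of `SL₂(ℤ_p)`. -/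
noncomputable def nElt (b : ℤ_[p]) : Matrix.SpecialLinearGroup (Fin 2) ℤ_[p] :=
  ⟨!![1, b; 0, 1], by simp [Matrix.det_fin_two_of]⟩

/-- The element `m(a) = [[a, 0], [0, a⁻¹]]` of `SL₂(ℤ_p)` for a unit `a`. -/
noncomputable def mElt (a : ℤ_[p]ˣ) : Matrix.SpecialLinearGroup (Fin 2) ℤ_[p] :=
  ⟨!![(a : ℤ_[p]), 0; 0, ((a⁻¹ : ℤ_[p]ˣ) : ℤ_[p])], by
    simp [Matrix.det_fin_two_of]⟩

/-- The element `w = [[0, 1], [-1, 0]]` of `SL₂(ℤ_p)`. -/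
noncomputable def wElt : Matrix.SpecialLinearGroup (Fin 2) ℤ_[p] :=
  ⟨!![0, 1; -1, 0], by simp [Matrix.det_fin_two_of]⟩

/-- The principal congruence subgroup `K(p)` of level `p`: matrices congruent to the
identity modulo `p`. -/
def Kp : Set (Matrix.SpecialLinearGroup (Fin 2) ℤ_[p]) :=
  {g | ∀ i j, (p : ℤ_[p]) ∣
    ((g : Matrix (Fin 2) (Fin 2) ℤ_[p]) i j - (1 : Matrix (Fin 2) (Fin 2) ℤ_[p]) i j)}

/-- The set of representatives `{1} ∪ {w n(j) : 0 ≤ j ≤ p-1}`. -/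
noncomputable def reps : Set (Matrix.SpecialLinearGroup (Fin 2) ℤ_[p]) :=
  {γ | γ = 1 ∨ ∃ j : ℕ, j < p ∧ γ = wElt p * nElt p (j : ℤ_[p])}

/-! Since `K(p)` is the kernel of reduction `SL₂(ℤ_p) → SL₂(𝔽_p)`, it suffices to work modulo `p`.
Existence is the Bruhat decomposition over `𝔽_p`: if the lower left entry `c` of `g` is a unit then
`g ≡ n(b) m(a) w n(d/c)`, otherwise `d` is a unit and `g ≡ n(b) m(a)`. For uniqueness, right
multiplication by `K(p)` fixes the bottom row modulo `p` and left multiplication by `n(b) m(a)` scales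
it by `a⁻¹`, while the bottom rows `(0, 1)` of `1` and `(-1, -j)` of `w n(j)` are pairwise
non-proportional in `𝔽_p²`. -/

open PadicInt

lemma dvd_iff_toZMod_eq_zero (x : ℤ_[p]) : (p : ℤ_[p]) ∣ x ↔ toZMod x = 0 := by
  rw [← Ideal.mem_span_singleton, ← maximalIdeal_eq_span_p, ← ker_toZMod, RingHom.mem_ker]

lemma isUnit_iff_toZMod_ne_zero (x : ℤ_[p]) : IsUnit x ↔ toZMod x ≠ 0 := by
  rw [← IsLocalRing.notMem_maximalIdeal, ← ker_toZMod, RingHom.mem_ker]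

lemma toZMod_units_ne_zero (a : ℤ_[p]ˣ) : toZMod (a : ℤ_[p]) ≠ 0 :=
  (isUnit_iff_toZMod_ne_zero p _).mp a.isUnit

noncomputable def reduceModP :
    Matrix.SpecialLinearGroup (Fin 2) ℤ_[p] →* Matrix.SpecialLinearGroup (Fin 2) (ZMod p) :=
  Matrix.SpecialLinearGroup.map toZMod

@[simp]
lemma reduceModP_apply (g : Matrix.SpecialLinearGroup (Fin 2) ℤ_[p]) (i j : Fin 2) :
    reduceModP p g i j = toZMod (g i j) :=
  rfl

lemma mem_Kp_iff_reduceModP_eq_one (k : Matrix.SpecialLinearGroup (Fin 2) ℤ_[p]) :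
    k ∈ Kp p ↔ reduceModP p k = 1 := by
  simp only [Kp, Set.mem_ofPred_eq, dvd_iff_toZMod_eq_zero, map_sub, sub_eq_zero,
    Matrix.SpecialLinearGroup.ext_iff, reduceModP_apply, Matrix.SpecialLinearGroup.coe_one,
    Matrix.one_apply, apply_ite toZMod, map_one, map_zero]

lemma inv_mul_mem_Kp_iff (g h : Matrix.SpecialLinearGroup (Fin 2) ℤ_[p]) :
    h⁻¹ * g ∈ Kp p ↔ reduceModP p g = reduceModP p h := by
  rw [mem_Kp_iff_reduceModP_eq_one, map_mul, map_inv, inv_mul_eq_one, eq_comm]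

lemma coe_nElt_mul_mElt_mul (b : ℤ_[p]) (a : ℤ_[p]ˣ)
    (γ : Matrix.SpecialLinearGroup (Fin 2) ℤ_[p]) :
    ((nElt p b * mElt p a * γ : Matrix.SpecialLinearGroup (Fin 2) ℤ_[p]) :
      Matrix (Fin 2) (Fin 2) ℤ_[p]) =
    !![a * γ 0 0 + b * a⁻¹ * γ 1 0, a * γ 0 1 + b * a⁻¹ * γ 1 1;
       a⁻¹ * γ 1 0, a⁻¹ * γ 1 1] := by
  simp only [Matrix.SpecialLinearGroup.coe_mul]
  rw [Matrix.eta_fin_two (γ : Matrix (Fin 2) (Fin 2) ℤ_[p])]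
  simp [nElt, mElt]

lemma coe_wElt_mul_nElt (x : ℤ_[p]) :
    ((wElt p * nElt p x : Matrix.SpecialLinearGroup (Fin 2) ℤ_[p]) :
      Matrix (Fin 2) (Fin 2) ℤ_[p]) = !![0, 1; -1, -x] := by
  simp only [Matrix.SpecialLinearGroup.coe_mul]
  simp [wElt, nElt]

lemma toZMod_det_eq_one (g : Matrix.SpecialLinearGroup (Fin 2) ℤ_[p]) :
    toZMod (g 0 0) * toZMod (g 1 1) - toZMod (g 0 1) * toZMod (g 1 0) = 1 := by
  have h := (reduceModP p g).det_coe
  rw [Matrix.det_fin_two] at h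
  simpa using h

lemma reduceModP_ext {g h : Matrix.SpecialLinearGroup (Fin 2) ℤ_[p]}
    (H : ∀ i j, toZMod (g i j) = toZMod (h i j)) : reduceModP p g = reduceModP p h :=
  Matrix.SpecialLinearGroup.ext _ _ H

lemma exists_reduceModP_eq_nElt_mul_mElt (g : Matrix.SpecialLinearGroup (Fin 2) ℤ_[p])
    (hc : toZMod (g 1 0) = 0) :
    ∃ (b : ℤ_[p]) (a : ℤ_[p]ˣ), reduceModP p g = reduceModP p (nElt p b * mElt p a * 1) := by
  have hdet : toZMod (g 0 0) * toZMod (g 1 1) = 1 := by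
    simpa [hc] using toZMod_det_eq_one p g
  have hd0 : toZMod (g 1 1) ≠ 0 := right_ne_zero_of_mul_eq_one hdet
  have hd : IsUnit (g 1 1) := (isUnit_iff_toZMod_ne_zero p _).mpr hd0
  refine ⟨g 0 1 * ↑hd.unit⁻¹, hd.unit⁻¹, reduceModP_ext p fun i j => ?_⟩
  rw [coe_nElt_mul_mElt_mul]
  fin_cases i <;> fin_cases j <;> simp [hc, map_units_inv]
  · exact eq_inv_of_mul_eq_one_left hdet
  · field_simp

lemma exists_reduceModP_eq_nElt_mul_mElt_mul_wElt_mul_nElt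
    (g : Matrix.SpecialLinearGroup (Fin 2) ℤ_[p]) (hc : toZMod (g 1 0) ≠ 0) :
    ∃ (b : ℤ_[p]) (a : ℤ_[p]ˣ), ∃ j < p,
      reduceModP p g = reduceModP p (nElt p b * mElt p a * (wElt p * nElt p j)) := by
  have hdet := toZMod_det_eq_one p g
  have hcU : IsUnit (g 1 0) := (isUnit_iff_toZMod_ne_zero p _).mpr hc
  refine ⟨g 0 0 * ↑hcU.unit⁻¹, -hcU.unit⁻¹, (toZMod (g 1 1) / toZMod (g 1 0)).val,
    ZMod.val_lt _, reduceModP_ext p fun i j => ?_⟩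
  rw [coe_nElt_mul_mElt_mul, coe_wElt_mul_nElt]
  fin_cases i <;> fin_cases j <;> simp [map_units_inv]
  · field_simp
  · field_simp
    linear_combination -hdet
  · field_simp

lemma exists_mem_reps_reduceModP_eq (g : Matrix.SpecialLinearGroup (Fin 2) ℤ_[p]) :
    ∃ (b : ℤ_[p]) (a : ℤ_[p]ˣ), ∃ γ ∈ reps p,
      reduceModP p g = reduceModP p (nElt p b * mElt p a * γ) := by
  by_cases hc : toZMod (g 1 0) = 0
  · obtain ⟨b, a, h⟩ := exists_reduceModP_eq_nElt_mul_mElt p g hc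
    exact ⟨b, a, 1, Or.inl rfl, h⟩
  · obtain ⟨b, a, j, hj, h⟩ := exists_reduceModP_eq_nElt_mul_mElt_mul_wElt_mul_nElt p g hc
    exact ⟨b, a, _, Or.inr ⟨j, hj, rfl⟩, h⟩

lemma exists_eq_nElt_mul_mElt_mul_rep_mul_mem_Kp (g : Matrix.SpecialLinearGroup (Fin 2) ℤ_[p]) :
    ∃ (b : ℤ_[p]) (a : ℤ_[p]ˣ) (γ k : Matrix.SpecialLinearGroup (Fin 2) ℤ_[p]),
      γ ∈ reps p ∧ k ∈ Kp p ∧ g = nElt p b * mElt p a * γ * k := by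
  obtain ⟨b, a, γ, hγ, h⟩ := exists_mem_reps_reduceModP_eq p g
  exact ⟨b, a, γ, _, hγ, (inv_mul_mem_Kp_iff p _ _).mpr h, (mul_inv_cancel_left _ _).symm⟩

lemma toZMod_bottom_row_eq_of_mul_eq {b₁ b₂ : ℤ_[p]} {a₁ a₂ : ℤ_[p]ˣ}
    {γ₁ γ₂ k₁ k₂ : Matrix.SpecialLinearGroup (Fin 2) ℤ_[p]} (hk₁ : k₁ ∈ Kp p) (hk₂ : k₂ ∈ Kp p)
    (E : nElt p b₁ * mElt p a₁ * γ₁ * k₁ = nElt p b₂ * mElt p a₂ * γ₂ * k₂) (i : Fin 2) :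
    toZMod (a₁⁻¹ : ℤ_[p]ˣ) * toZMod (γ₁ 1 i) = toZMod (a₂⁻¹ : ℤ_[p]ˣ) * toZMod (γ₂ 1 i) := by
  have h := congrArg (reduceModP p) E
  rw [map_mul _ _ k₁, map_mul _ _ k₂, (mem_Kp_iff_reduceModP_eq_one p k₁).mp hk₁,
    (mem_Kp_iff_reduceModP_eq_one p k₂).mp hk₂, mul_one, mul_one] at h
  have h1i := congrArg (fun g => g 1 i) h
  simp only [reduceModP_apply, coe_nElt_mul_mElt_mul] at h1i
  fin_cases i <;> simpa using h1i

lemma eq_of_mem_reps_of_toZMod_bottom_row_eq {γ₁ γ₂ : Matrix.SpecialLinearGroup (Fin 2) ℤ_[p]}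
    (hγ₁ : γ₁ ∈ reps p) (hγ₂ : γ₂ ∈ reps p) {u₁ u₂ : ZMod p} (hu₁ : u₁ ≠ 0) (hu₂ : u₂ ≠ 0)
    (H : ∀ i, u₁ * toZMod (γ₁ 1 i) = u₂ * toZMod (γ₂ 1 i)) : γ₁ = γ₂ := by
  rcases hγ₁ with rfl | ⟨j₁, hj₁, rfl⟩ <;> rcases hγ₂ with rfl | ⟨j₂, hj₂, rfl⟩ <;>
    simp only [coe_wElt_mul_nElt, Matrix.SpecialLinearGroup.coe_one] at H
  · rfl
  · exact absurd (by simpa using H 0) hu₂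
  · exact absurd (by simpa using H 0) hu₁
  · have hu : u₁ = u₂ := by simpa using H 0
    have hj : (j₁ : ZMod p) = j₂ := by simpa [hu, hu₂] using H 1
    rw [← ZMod.val_cast_of_lt hj₁, ← ZMod.val_cast_of_lt hj₂, hj]

/-- Every `g ∈ SL₂(ℤ_p)` can be written as `n(b) m(a) γ k` with `γ` in the set of
representatives `{1} ∪ {w n(j) : 0 ≤ j ≤ p-1}` and `k ∈ K(p)`; moreover the `p+1`
double cosets `N(ℤ_p)M(ℤ_p) γ K(p)` are pairwise disjoint. -/
theorem double_coset_decomposition :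
    (∀ g : Matrix.SpecialLinearGroup (Fin 2) ℤ_[p],
      ∃ (b : ℤ_[p]) (a : ℤ_[p]ˣ) (γ k : Matrix.SpecialLinearGroup (Fin 2) ℤ_[p]),
        γ ∈ reps p ∧ k ∈ Kp p ∧ g = nElt p b * mElt p a * γ * k) ∧
    (∀ γ₁ ∈ reps p, ∀ γ₂ ∈ reps p,
      (∃ (b₁ b₂ : ℤ_[p]) (a₁ a₂ : ℤ_[p]ˣ) (k₁ k₂ : Matrix.SpecialLinearGroup (Fin 2) ℤ_[p]),
        k₁ ∈ Kp p ∧ k₂ ∈ Kp p ∧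
          nElt p b₁ * mElt p a₁ * γ₁ * k₁ = nElt p b₂ * mElt p a₂ * γ₂ * k₂) →
      γ₁ = γ₂) := by
  refine ⟨exists_eq_nElt_mul_mElt_mul_rep_mul_mem_Kp p, ?_⟩
  rintro γ₁ hγ₁ γ₂ hγ₂ ⟨b₁, b₂, a₁, a₂, k₁, k₂, hk₁, hk₂, E⟩
  exact eq_of_mem_reps_of_toZMod_bottom_row_eq p hγ₁ hγ₂ (toZMod_units_ne_zero p _)
    (toZMod_units_ne_zero p _) (toZMod_bottom_row_eq_of_mul_eq p hk₁ hk₂ E)
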